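/- arXiv:2407.10015 — 5 statements merged into one kernel-verified Lean document; each statement's English description precedes it below -/
import Mathlib

section
/- There exists a nonempty closed subset Q of Baire space such that for every closed subset P of Cantor space there do not exist maps Φ, Ψ : (ℕ → ℕ) → (ℕ → ℕ) with: Ψ continuous, Φ '' Q ⊆ P, Ψ '' P ⊆ Q, Φ f ≤ᵀ f for every f ∈ Q, and Ψ h ≤ᵀ h for every h ∈ P. (In particular, Q is not Medvedev equivalent to any closed subset of Cantor space, since Turing functionals are continuous and map each oracle to an output computable from it.) -/
/-- Partial recursiveness in an oracle `g` (following Mathlib's `Nat.Partrec`,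
with an extra `oracle` constructor). -/
inductive OracleRecursiveIn (g : ℕ →. ℕ) : (ℕ →. ℕ) → Prop
  | zero : OracleRecursiveIn g (fun _ => Part.some 0)
  | succ : OracleRecursiveIn g ↑Nat.succ
  | left : OracleRecursiveIn g ↑(fun n : ℕ => n.unpair.1)
  | right : OracleRecursiveIn g ↑(fun n : ℕ => n.unpair.2)
  | oracle : OracleRecursiveIn g g
  | pair {f h : ℕ →. ℕ} : OracleRecursiveIn g f → OracleRecursiveIn g h →
      OracleRecursiveIn g (fun n => Nat.pair <$> f n <*> h n)
  | comp {f h : ℕ →. ℕ} : OracleRecursiveIn g f → OracleRecursiveIn g h →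
      OracleRecursiveIn g (fun n => h n >>= f)
  | prec {f h : ℕ →. ℕ} : OracleRecursiveIn g f → OracleRecursiveIn g h →
      OracleRecursiveIn g (Nat.unpaired fun a n =>
        n.rec (f a) fun y IH => do let i ← IH; h (Nat.pair a (Nat.pair y i)))
  | rfind {f : ℕ →. ℕ} : OracleRecursiveIn g f →
      OracleRecursiveIn g (fun a => Nat.rfind fun n => (fun m => m = 0) <$> f (Nat.pair a n))

/-- `f ≤ᵀ g` : `f` is Turing reducible to `g`, i.e. `f` is computable with oracle `g`. -/
def OracleTuringReducible (f g : ℕ → ℕ) : Prop :=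
  OracleRecursiveIn ↑g ↑f

infix:50 " ≤ᵀ " => OracleTuringReducible

/-!
By a Baire category argument there are reals `x 0, x 1, …` none of which computes another: for
`j ≠ k` and an oracle program `c`, the reals `Y` whose column `k` computes column `j` via `c` form
a nowhere dense set, because by the use principle a converging computation only reads finitely
much of its oracle. Let `Q = {k :: x k}`, which is closed since each point is determined by its
head. If `P` is a closed subset of Cantor space, then `Ψ '' P` is compact, so its heads are bounded
by some `B`; hence `Ψ (Φ ((B + 1) :: x (B + 1))) = k :: x k` with `k ≤ B`, and `x k ≤ᵀ x (B + 1)`.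
-/

namespace OracleRecursiveIn

variable {g h f : ℕ →. ℕ}

theorem of_partrec (hf : Nat.Partrec f) : OracleRecursiveIn g f := by
  induction hf with
  | zero => exact .zero
  | succ => exact .succ
  | left => exact .left
  | right => exact .right
  | pair _ _ ih₁ ih₂ => exact .pair ih₁ ih₂
  | comp _ _ ih₁ ih₂ => exact .comp ih₁ ih₂
  | prec _ _ ih₁ ih₂ => exact .prec ih₁ ih₂
  | rfind _ ih => exact .rfind ih

theorem trans (hf : OracleRecursiveIn g f) (hg : OracleRecursiveIn h g) :
    OracleRecursiveIn h f := by
  induction hf with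
  | zero => exact .zero
  | succ => exact .succ
  | left => exact .left
  | right => exact .right
  | oracle => exact hg
  | pair _ _ ih₁ ih₂ => exact .pair ih₁ ih₂
  | comp _ _ ih₁ ih₂ => exact .comp ih₁ ih₂
  | prec _ _ ih₁ ih₂ => exact .prec ih₁ ih₂
  | rfind _ ih => exact .rfind ih

end OracleRecursiveIn

namespace OracleTuringReducible

theorem trans {f g h : ℕ → ℕ} (hfg : f ≤ᵀ g) (hgh : g ≤ᵀ h) : f ≤ᵀ h :=
  OracleRecursiveIn.trans hfg hgh

theorem of_primrec {g u : ℕ → ℕ} {φ : ℕ → ℕ → ℕ} (hu : Nat.Primrec u) (hφ : Primrec₂ φ) :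
    (fun n => φ n (g (u n))) ≤ᵀ g := by
  have hgu : OracleRecursiveIn g ((fun n => g (u n) : ℕ → ℕ) : ℕ →. ℕ) := by
    have h := OracleRecursiveIn.comp .oracle (.of_partrec (g := g) (.of_primrec hu))
    rwa [show (fun n => (u : ℕ →. ℕ) n >>= (g : ℕ →. ℕ)) = ((fun n => g (u n) : ℕ → ℕ) : ℕ →. ℕ)
      from funext fun n => Part.bind_some (u n) fun a => Part.some (g a)] at h
  have hφ' : Nat.Primrec fun p => φ p.unpair.1 p.unpair.2 := Primrec.nat_iff.1 <|
    hφ.comp (Primrec.fst.comp Primrec.unpair) (Primrec.snd.comp Primrec.unpair)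
  have h := OracleRecursiveIn.comp (.of_partrec (.of_primrec hφ'))
    (.pair (.of_partrec (.of_primrec .id)) hgu)
  rwa [show (fun n => _) = ((fun n => φ n (g (u n)) : ℕ → ℕ) : ℕ →. ℕ) from funext fun n => by
    simp only [Seq.seq, PFun.coe_val, id_eq, Part.map_eq_map, Part.map_some, Part.bind_some]
    exact (Part.bind_some _ _).trans (by simp)] at h

end OracleTuringReducible

def cons (k : ℕ) (x : ℕ → ℕ) : ℕ → ℕ
  | 0 => k
  | n + 1 => x n

theorem turingReducible_cons (k : ℕ) (x : ℕ → ℕ) : x ≤ᵀ cons k x :=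
  OracleTuringReducible.of_primrec (φ := fun _ v => v) .succ Primrec₂.right

theorem cons_turingReducible (k : ℕ) (x : ℕ → ℕ) : cons k x ≤ᵀ x := by
  convert OracleTuringReducible.of_primrec (g := x) (φ := fun n v => if n = 0 then k else v) .pred
    (Primrec.ite (Primrec.eq.comp Primrec.fst (Primrec.const 0)) (Primrec.const k) Primrec.snd)
    using 1
  funext n
  cases n <;> rfl

-- Programs for `OracleRecursiveIn`: countably many, each of which runs with any oracle.
inductive OCode : Type
  | zero | succ | left | right | oracle
  | pair (a b : OCode) | comp (a b : OCode) | prec (a b : OCode) | rfind (a : OCode)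
  deriving Countable

namespace OCode

def eval (g : ℕ → ℕ) : OCode → ℕ →. ℕ
  | zero => fun _ => Part.some 0
  | succ => ↑Nat.succ
  | left => ↑fun n : ℕ => n.unpair.1
  | right => ↑fun n : ℕ => n.unpair.2
  | oracle => ↑g
  | pair a b => fun n => Nat.pair <$> a.eval g n <*> b.eval g n
  | comp a b => fun n => b.eval g n >>= a.eval g
  | prec a b => Nat.unpaired fun x n =>
      n.rec (a.eval g x) fun y IH => do let i ← IH; b.eval g (Nat.pair x (Nat.pair y i))
  | rfind a => fun x => Nat.rfind fun n => (fun m => m = 0) <$> a.eval g (Nat.pair x n)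

open Topology in
theorem eventually_mem_eval {c : OCode} {g : ℕ → ℕ} {n m : ℕ} (h : m ∈ c.eval g n) :
    ∀ᶠ g' in 𝓝 g, m ∈ c.eval g' n := by
  induction c generalizing n m with
  | zero | succ | left | right => exact Filter.Eventually.of_forall fun _ => h
  | oracle =>
    simp only [eval, PFun.coe_val, Part.mem_some_iff] at h ⊢
    filter_upwards [(continuous_apply n).continuousAt.eventually_mem
      ((isOpen_discrete {g n}).mem_nhds rfl)] with g' hg'
    exact h.trans hg'.symm
  | pair a b iha ihb =>
    simp only [eval, Seq.seq, Part.map_eq_map, Part.mem_bind_iff, Part.mem_map_iff] at h ⊢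
    obtain ⟨_, ⟨x, hx, rfl⟩, y, hy, rfl⟩ := h
    filter_upwards [iha hx, ihb hy] with g' hx' hy'
    exact ⟨_, ⟨x, hx', rfl⟩, y, hy', rfl⟩
  | comp a b iha ihb =>
    obtain ⟨r, hr, hm⟩ := Part.mem_bind_iff.1 h
    filter_upwards [ihb hr, iha hm] with g' hr' hm'
    exact Part.mem_bind_iff.2 ⟨r, hr', hm'⟩
  | prec a b iha ihb =>
    have key : ∀ x y m, m ∈ Nat.rec (motive := fun _ => Part ℕ) (a.eval g x)
        (fun y IH => IH >>= fun i => b.eval g (Nat.pair x (Nat.pair y i))) y →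
        ∀ᶠ g' in 𝓝 g, m ∈ Nat.rec (motive := fun _ => Part ℕ) (a.eval g' x)
          (fun y IH => IH >>= fun i => b.eval g' (Nat.pair x (Nat.pair y i))) y := by
      intro x y
      induction y with
      | zero => exact fun m hm => iha hm
      | succ y ih =>
        intro m hm
        obtain ⟨i, hi, hm⟩ := Part.mem_bind_iff.1 hm
        filter_upwards [ih i hi, ihb hm] with g' hi' hm'
        exact Part.mem_bind_iff.2 ⟨i, hi', hm'⟩
    exact key _ _ m h
  | rfind a ih =>
    obtain ⟨h0, hlt⟩ := Nat.mem_rfind.1 h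
    obtain ⟨v, hv, hv0⟩ := (Part.mem_map_iff _).1 h0
    choose w hw hw0 using fun k : Fin m => (Part.mem_map_iff _).1 (hlt k.isLt)
    filter_upwards [ih hv, Filter.eventually_all.2 fun k => ih (hw k)] with g' hv' hw'
    exact Nat.mem_rfind.2 ⟨(Part.mem_map_iff _).2 ⟨v, hv', hv0⟩,
      fun hk => (Part.mem_map_iff _).2 ⟨_, hw' ⟨_, hk⟩, hw0 _⟩⟩

theorem isOpen_setOf_mem_eval (c : OCode) (n m : ℕ) : IsOpen {g | m ∈ c.eval g n} :=
  isOpen_iff_mem_nhds.2 fun _ => eventually_mem_eval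

end OCode

theorem OracleRecursiveIn.exists_oCode {g : ℕ → ℕ} {f : ℕ →. ℕ} (h : OracleRecursiveIn g f) :
    ∃ c : OCode, c.eval g = f := by
  induction h with
  | zero => exact ⟨.zero, rfl⟩
  | succ => exact ⟨.succ, rfl⟩
  | left => exact ⟨.left, rfl⟩
  | right => exact ⟨.right, rfl⟩
  | oracle => exact ⟨.oracle, rfl⟩
  | pair _ _ ih₁ ih₂ =>
    obtain ⟨a, rfl⟩ := ih₁; obtain ⟨b, rfl⟩ := ih₂; exact ⟨.pair a b, rfl⟩
  | comp _ _ ih₁ ih₂ =>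
    obtain ⟨a, rfl⟩ := ih₁; obtain ⟨b, rfl⟩ := ih₂; exact ⟨.comp a b, rfl⟩
  | prec _ _ ih₁ ih₂ =>
    obtain ⟨a, rfl⟩ := ih₁; obtain ⟨b, rfl⟩ := ih₂; exact ⟨.prec a b, rfl⟩
  | rfind _ ih =>
    obtain ⟨a, rfl⟩ := ih; exact ⟨.rfind a, rfl⟩

def column (Y : ℕ → ℕ) (k : ℕ) : ℕ → ℕ := fun n => Y (Nat.pair k n)

theorem continuous_column (k : ℕ) : Continuous fun Y : ℕ → ℕ => column Y k :=
  continuous_pi fun n => continuous_apply (Nat.pair k n)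

open PiNat in
theorem exists_cylinder_subset {U : Set (ℕ → ℕ)} (hU : IsOpen U) {Z : ℕ → ℕ} (hZ : Z ∈ U) :
    ∃ N, cylinder Z N ⊆ U := by
  obtain ⟨_, ⟨x, N, rfl⟩, hZx, hxU⟩ :=
    (isTopologicalBasis_cylinders fun _ => ℕ).mem_nhds_iff.1 (hU.mem_nhds hZ)
  exact ⟨N, (mem_cylinder_iff_eq.1 hZx).symm ▸ hxU⟩

open PiNat in
theorem dense_interior_setOf_eval_column_ne {j k : ℕ} (hjk : j ≠ k) (c : OCode) :
    Dense (interior {Y | c.eval (column Y k) ≠ (column Y j : ℕ →. ℕ)}) := by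
  refine dense_iff_inter_open.2 fun U hU ⟨Z, hZ⟩ => ?_
  obtain ⟨N, hNU⟩ := exists_cylinder_subset hU hZ
  suffices ∃ V ⊆ cylinder Z N, IsOpen V ∧ V.Nonempty ∧
      V ⊆ {Y | c.eval (column Y k) ≠ (column Y j : ℕ →. ℕ)} by
    obtain ⟨V, hVZ, hV, ⟨Y, hY⟩, hVgood⟩ := this
    exact ⟨Y, hNU (hVZ hY), interior_maximal hVgood hV hY⟩
  -- Either `c` converges at `N` on some `W` in the cylinder, and we make column `j` of `W` disagree
  -- at `N`, or `c` diverges at `N` on the whole cylinder.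
  by_cases hdef : ∃ W ∈ cylinder Z N, ∃ m, m ∈ c.eval (column W k) N
  · obtain ⟨W, hW, m, hm⟩ := hdef
    set p := Nat.pair j N
    set W' := Function.update W p (m + 1)
    have hW' : W' ∈ cylinder Z N := by
      refine fun i hi => (Function.update_of_ne ?_ _ _).trans (hW i hi)
      have := Nat.right_le_pair j N
      omega
    have hW'm : m ∈ c.eval (column W' k) N := by
      have hW'k : column W' k = column W k :=
        funext fun i => Function.update_of_ne (fun h => hjk (Nat.pair_eq_pair.1 h).1.symm) _ _
      rwa [hW'k]
    refine ⟨cylinder Z N ∩ {Y | m ∈ c.eval (column Y k) N} ∩ {Y | Y p = m + 1},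
      fun _ h => h.1.1, ?_, ⟨W', ⟨hW', hW'm⟩, Function.update_self _ _ _⟩, ?_⟩
    · exact ((isOpen_cylinder _ _ _).inter ((c.isOpen_setOf_mem_eval N m).preimage
        (continuous_column k))).inter ((isOpen_discrete {m + 1}).preimage
        (continuous_apply p : Continuous fun Y : ℕ → ℕ => Y p))
    · rintro Y ⟨⟨-, hYm⟩, hYp⟩ hY
      replace hYm : m ∈ (column Y j : ℕ →. ℕ) N := hY ▸ hYm
      rw [PFun.coe_val, Part.mem_some_iff] at hYm
      exact Nat.succ_ne_self m (hYp.symm.trans hYm.symm)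
  · refine ⟨cylinder Z N, subset_rfl, isOpen_cylinder _ _ _, ⟨Z, self_mem_cylinder _ _⟩, ?_⟩
    intro Y hY hYeq
    exact hdef ⟨Y, hY, column Y j N, hYeq ▸ Part.mem_some _⟩

theorem exists_turingAntichain : ∃ x : ℕ → ℕ → ℕ, ∀ j k, j ≠ k → ¬ x j ≤ᵀ x k := by
  have hgeneric : ∀ᶠ Y in residual (ℕ → ℕ),
      ∀ j k, j ≠ k → ∀ c : OCode, c.eval (column Y k) ≠ (column Y j : ℕ →. ℕ) := by
    refine eventually_countable_forall.2 fun j => eventually_countable_forall.2 fun k => ?_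
    by_cases hjk : j = k
    · exact .of_forall fun _ h => absurd hjk h
    refine (eventually_countable_forall.2 fun c => ?_).mono fun _ hY _ => hY
    exact Filter.mem_of_superset (residual_of_dense_open isOpen_interior
      (dense_interior_setOf_eval_column_ne hjk c)) interior_subset
  obtain ⟨Y, hY⟩ := (dense_of_mem_residual hgeneric).nonempty
  refine ⟨column Y, fun j k hjk hred => ?_⟩
  obtain ⟨c, hc⟩ := hred.exists_oCode
  exact hY j k hjk c hc

theorem isClosed_range_of_apply_zero {F : ℕ → ℕ → ℕ} (hF : ∀ k, F k 0 = k) :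
    IsClosed (Set.range F) := by
  have hrange : Set.range F = {f | F (f 0) = f} :=
    Set.ext fun f => ⟨fun ⟨k, hk⟩ => hk ▸ congrArg F (hF k), fun hf => ⟨f 0, hf⟩⟩
  rw [hrange]
  exact isClosed_eq (continuous_of_discreteTopology.comp (continuous_apply 0)) continuous_id

theorem isCompact_setOf_forall_le (b : ℕ → ℕ) : IsCompact {f : ℕ → ℕ | ∀ n, f n ≤ b n} := by
  simpa [Set.pi, Set.Iic] using isCompact_univ_pi fun n => (Set.finite_Iic (b n)).isCompact

/-- There is a nonempty closed subset `Q` of Baire space (`ℕ → ℕ` with the product topology)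
such that for every closed subset `P` of Cantor space (identified with the closed set
`{f | ∀ n, f n ≤ 1}` of Baire space) there are no maps `Φ, Ψ` with `Ψ` continuous,
`Φ '' Q ⊆ P`, `Ψ '' P ⊆ Q`, `Φ f ≤ᵀ f` on `Q` and `Ψ h ≤ᵀ h` on `P`. -/
theorem closed_baire_not_medvedev_equiv_closed_cantor :
    ∃ Q : Set (ℕ → ℕ), Q.Nonempty ∧ IsClosed Q ∧
      ∀ P : Set (ℕ → ℕ), IsClosed P → P ⊆ {f : ℕ → ℕ | ∀ n, f n ≤ 1} →
        ¬ ∃ Φ Ψ : (ℕ → ℕ) → (ℕ → ℕ),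
            Continuous Ψ ∧ Φ '' Q ⊆ P ∧ Ψ '' P ⊆ Q ∧
            (∀ f ∈ Q, Φ f ≤ᵀ f) ∧ (∀ h ∈ P, Ψ h ≤ᵀ h) := by
  obtain ⟨x, hx⟩ := exists_turingAntichain
  refine ⟨Set.range fun k => cons k (x k), Set.range_nonempty _,
    isClosed_range_of_apply_zero fun _ => rfl, ?_⟩
  rintro P hPclosed hPcantor ⟨Φ, Ψ, hΨ, hΦQ, hΨP, hΦred, hΨred⟩
  have hPcompact : IsCompact P :=
    (isCompact_setOf_forall_le _).of_isClosed_subset hPclosed hPcantor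
  obtain ⟨B, hB⟩ := (hPcompact.image hΨ).bddAbove_image (continuous_apply 0).continuousOn
  set f := cons (B + 1) (x (B + 1))
  have hfQ : f ∈ Set.range fun k => cons k (x k) := ⟨B + 1, rfl⟩
  have hΦf : Φ f ∈ P := hΦQ ⟨f, hfQ, rfl⟩
  obtain ⟨k, hk⟩ := hΨP ⟨Φ f, hΦf, rfl⟩
  have hkB : k ≤ B := hB ⟨_, ⟨Φ f, hΦf, rfl⟩, by rw [← hk]; rfl⟩
  have hred : x k ≤ᵀ x (B + 1) :=
    ((turingReducible_cons k (x k)).trans (hk ▸ (hΨred _ hΦf).trans (hΦred f hfQ))).trans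
      (cons_turingReducible _ _)
  exact hx k (B + 1) (by omega) hred
end

section
/- Let F be a treemap and let f : ℕ → ℕ be a path through F(T), i.e., every finite initial segment of f belongs to F(T) = {τ | ∃ σ, τ ⊆ F(σ)}. Then for every n ∈ ℕ there exists a finite string σ such that f↾n ⊆ F(σ) and F(σ) is an initial segment of f (f↾n ⊆ F(σ) ⊂ f). -/
/-- A treemap is `F : ℕ^{<ℕ} → ℕ^{<ℕ}` (strings as lists of naturals) with
`F(σ)⌢i ⊆ F(σ⌢i)` for all strings `σ` and all `i : ℕ`. -/
def Treemap (F : List ℕ → List ℕ) : Prop :=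
  ∀ (σ : List ℕ) (i : ℕ), (F σ ++ [i]) <+: F (σ ++ [i])

/-- The tree `F(T) = {τ | ∃ σ, τ ⊆ F(σ)}` determined by a treemap `F`. -/
def treeOf (F : List ℕ → List ℕ) : Set (List ℕ) :=
  {τ | ∃ σ : List ℕ, τ <+: F σ}

/-- The initial segment `f↾n = (f 0, …, f (n-1))` of `f : ℕ → ℕ`. -/
def restrict (f : ℕ → ℕ) (n : ℕ) : List ℕ :=
  (List.range n).map f

/-- `σ` is an initial segment of `f : ℕ → ℕ`. -/
def IsInitSeg (σ : List ℕ) (f : ℕ → ℕ) : Prop :=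
  σ = restrict f σ.length

/-- The set of paths through the tree `F(T)` of a treemap `F`. -/
def pathSet (F : List ℕ → List ℕ) : Set (ℕ → ℕ) :=
  {f | ∀ n : ℕ, restrict f n ∈ treeOf F}

/-! Follow `f` through the treemap: starting from the empty string, append at each step the
value of `f` at the position just past the current image. Every image along the way is an initial
segment of `f`, because any `σ` whose image covers a long enough part of `f` must extend these
strings: an entry `x` of `σ` after `ρ` puts `x` at position `|F ρ|` of `F σ`, so it is forced to
be `f |F ρ|`. Since the images grow by at least one each step, the `n`-th string works. -/

lemma restrict_length (f : ℕ → ℕ) (n : ℕ) : (restrict f n).length = n := by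
  simp [restrict]

lemma restrict_succ (f : ℕ → ℕ) (n : ℕ) : restrict f (n + 1) = restrict f n ++ [f n] := by
  simp [restrict, List.range_succ]

lemma restrict_take (f : ℕ → ℕ) {n m : ℕ} (h : n ≤ m) :
    (restrict f m).take n = restrict f n := by
  simp [restrict, ← List.map_take, Nat.min_eq_left h]

lemma restrict_prefix_restrict (f : ℕ → ℕ) {n m : ℕ} (h : n ≤ m) :
    restrict f n <+: restrict f m :=
  restrict_take f h ▸ List.take_prefix n _

lemma isInitSeg_of_prefix_restrict {l : List ℕ} {f : ℕ → ℕ} {m : ℕ} (h : l <+: restrict f m) :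
    IsInitSeg l f := by
  have hlen : l.length ≤ m := restrict_length f m ▸ h.length_le
  have hl := List.prefix_iff_eq_take.mp h
  rwa [restrict_take f hlen] at hl

lemma Treemap.monotone {F : List ℕ → List ℕ} (hF : Treemap F) {σ τ : List ℕ} (h : σ <+: τ) :
    F σ <+: F τ := by
  obtain ⟨ρ, rfl⟩ := h
  induction ρ using List.reverseRecOn with
  | nil => simp
  | append_singleton ρ i ih =>
    rw [← List.append_assoc]
    exact ih.trans ((List.prefix_append _ _).trans (hF _ i))

def pathPreimage (F : List ℕ → List ℕ) (f : ℕ → ℕ) : ℕ → List ℕ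
  | 0 => []
  | j + 1 => pathPreimage F f j ++ [f (F (pathPreimage F f j)).length]

section pathPreimage

variable {F : List ℕ → List ℕ} (hF : Treemap F) {f : ℕ → ℕ}
include hF

lemma Treemap.length_image_pathPreimage_lt (j : ℕ) :
    (F (pathPreimage F f j)).length < (F (pathPreimage F f (j + 1))).length := by
  have := (hF (pathPreimage F f j) (f (F (pathPreimage F f j)).length)).length_le
  simp only [List.length_append, List.length_singleton] at this
  exact this

lemma Treemap.le_length_image_pathPreimage (j : ℕ) : j ≤ (F (pathPreimage F f j)).length := by
  induction j with
  | zero => exact Nat.zero_le _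
  | succ j ih => exact ih.trans_lt (hF.length_image_pathPreimage_lt j)

lemma Treemap.eq_of_append_prefix {ρ σ : List ℕ} {x m : ℕ} (hx : ρ ++ [x] <+: σ)
    (hσ : restrict f m <+: F σ) (hm : (F ρ).length < m) : x = f (F ρ).length := by
  have hFx : F ρ ++ [x] <+: F σ := (hF ρ x).trans (hF.monotone hx)
  have hle : (F ρ ++ [x]).length ≤ (restrict f m).length := by
    simpa [restrict_length] using hm
  have hinit := isInitSeg_of_prefix_restrict (List.prefix_of_prefix_length_le hFx hσ hle)
  rw [IsInitSeg, List.length_append, List.length_singleton, restrict_succ] at hinit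
  exact List.singleton_inj.mp (List.append_inj' hinit rfl).2

lemma Treemap.pathPreimage_prefix {σ : List ℕ} {m : ℕ} (hσ : restrict f m <+: F σ) (j : ℕ)
    (hj : (F (pathPreimage F f j)).length ≤ m) : pathPreimage F f j <+: σ := by
  induction j with
  | zero => exact List.nil_prefix
  | succ j ih =>
    have hlt : (F (pathPreimage F f j)).length < m :=
      (hF.length_image_pathPreimage_lt j).trans_le hj
    obtain ⟨t, ht⟩ := ih hlt.le
    cases t with
    | nil =>
      rw [List.append_nil] at ht
      subst ht
      have := restrict_length f m ▸ hσ.length_le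
      omega
    | cons x t =>
      have hx : pathPreimage F f j ++ [x] <+: σ := ⟨t, by simp [← ht]⟩
      rw [pathPreimage, ← hF.eq_of_append_prefix hx hσ hlt]
      exact hx

lemma Treemap.isInitSeg_image_pathPreimage (hf : f ∈ pathSet F) (j : ℕ) :
    IsInitSeg (F (pathPreimage F f j)) f := by
  obtain ⟨σ, hσ⟩ := hf (F (pathPreimage F f j)).length
  have hτσ := hF.monotone (hF.pathPreimage_prefix hσ j le_rfl)
  refine isInitSeg_of_prefix_restrict (m := (F (pathPreimage F f j)).length) ?_
  exact List.prefix_of_prefix_length_le hτσ hσ (by rw [restrict_length])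

end pathPreimage

/-- If `f` is a path through `F(T)` then for every `n` there is a string `σ` with
`f↾n ⊆ F(σ) ⊂ f`. -/
theorem path_initseg_in_image (F : List ℕ → List ℕ) (hF : Treemap F)
    (f : ℕ → ℕ) (hf : f ∈ pathSet F) (n : ℕ) :
    ∃ σ : List ℕ, restrict f n <+: F σ ∧ IsInitSeg (F σ) f := by
  have hinit := hF.isInitSeg_image_pathPreimage hf n
  refine ⟨pathPreimage F f n, ?_, hinit⟩
  rw [hinit]
  exact restrict_prefix_restrict f (hF.le_length_image_pathPreimage n)
end

section
/- Let ⟨F_s⟩_{s ∈ ℕ} be a nested sequence of treemaps with pointwise limit F, and for each s let [T_s] be the set of f : ℕ → ℕ all of whose finite initial segments belong to F_s(T) = {τ | ∃ σ, τ ⊆ F_s(σ)}. Then the path set [F(T)] of the limit treemap is contained in ⋂_{s ∈ ℕ} [T_s]; in particular ⋂_{s ∈ ℕ} [T_s] is nonempty. -/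
private lemma chain_mono {F : List ℕ → List ℕ} (hF : Treemap F) :
    ∀ {n m : ℕ}, n ≤ m → F (List.replicate n 0) <+: F (List.replicate m 0) := by
  intro n m h
  induction m with
  | zero => simp_all
  | succ m ih =>
    rcases Nat.lt_or_ge n (m+1) with h' | h'
    · have h1 := ih (Nat.lt_succ_iff.mp h')
      have h2 : F (List.replicate m 0) ++ [0] <+: F (List.replicate (m+1) 0) := by
        have := hF (List.replicate m 0) 0
        simpa [List.replicate_succ' (n := m)] using this
      exact h1.trans ((List.prefix_append _ _).trans h2)
    · have : n = m + 1 := le_antisymm h h'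
      subst this; exact List.prefix_refl _

private lemma chain_len {F : List ℕ → List ℕ} (hF : Treemap F) :
    ∀ n : ℕ, n ≤ (F (List.replicate n 0)).length := by
  intro n
  induction n with
  | zero => simp
  | succ n ih =>
    have h2 : F (List.replicate n 0) ++ [0] <+: F (List.replicate (n+1) 0) := by
      have := hF (List.replicate n 0) 0
      simpa [List.replicate_succ' (n := n)] using this
    have := h2.length_le
    simp at this
    omega

/-- Any treemap has a path. -/
private lemma pathSet_nonempty {F : List ℕ → List ℕ} (hF : Treemap F) :
    (pathSet F).Nonempty := by
  refine ⟨fun n => (F (List.replicate (n+1) 0)).getD n 0, fun m => ?_⟩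
  refine ⟨List.replicate m 0, ?_⟩
  have hlen : m ≤ (F (List.replicate m 0)).length := chain_len hF m
  have : restrict (fun n => (F (List.replicate (n+1) 0)).getD n 0) m
      = (F (List.replicate m 0)).take m := by
    apply List.ext_getElem
    · simp [restrict]; omega
    · intro k hk1 hk2
      simp only [restrict, List.getElem_map, List.getElem_range, List.getElem_take]
      have hkm : k < m := by simpa [restrict] using hk1
      have hpre : F (List.replicate (k+1) 0) <+: F (List.replicate m 0) :=
        chain_mono hF hkm
      have hklen : k < (F (List.replicate (k+1) 0)).length :=
        lt_of_lt_of_le (Nat.lt_succ_self k) (chain_len hF (k+1))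
      rw [List.getD_eq_getElem _ _ hklen]
      exact hpre.getElem hklen
  rw [this]
  exact List.take_prefix _ _

/-- For a nested sequence of treemaps with limit `F`, the path set of `F` is contained in
the intersection of the path sets of the stages; in particular that intersection is
nonempty. -/
theorem pathSet_limit_subset_iInter (Fs : ℕ → List ℕ → List ℕ) (F : List ℕ → List ℕ)
    (htm : ∀ s, Treemap (Fs s))
    (h0 : ∀ σ : List ℕ, Fs 0 σ = σ)
    (hnest : ∀ s, Set.range (Fs (s + 1)) ⊆ Set.range (Fs s))
    (hlim : ∀ σ : List ℕ, ∃ N, ∀ s ≥ N, Fs s σ = F σ) :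
    pathSet F ⊆ (⋂ s : ℕ, pathSet (Fs s)) ∧ (⋂ s : ℕ, pathSet (Fs s)).Nonempty := by
  have hrange : ∀ s t : ℕ, s ≤ t → Set.range (Fs t) ⊆ Set.range (Fs s) := by
    intro s t h
    induction t with
    | zero => simp_all
    | succ t ih =>
      rcases Nat.lt_or_ge s (t+1) with h' | h'
      · exact (hnest t).trans (ih (Nat.lt_succ_iff.mp h'))
      · have : s = t + 1 := le_antisymm h h'
        subst this; exact subset_rfl
  have hsub : pathSet F ⊆ ⋂ s : ℕ, pathSet (Fs s) := by
    intro f hf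
    simp only [Set.mem_iInter]
    intro s n
    obtain ⟨σ, hσ⟩ := hf n
    obtain ⟨N, hN⟩ := hlim σ
    have h1 : Fs (max N s) σ = F σ := hN _ (le_max_left _ _)
    have h2 : Fs (max N s) σ ∈ Set.range (Fs s) :=
      hrange s (max N s) (le_max_right _ _) ⟨σ, rfl⟩
    obtain ⟨σ', hσ'⟩ := h2
    exact ⟨σ', by rw [hσ', h1]; exact hσ⟩
  have hFtm : Treemap F := by
    intro σ i
    obtain ⟨N1, hN1⟩ := hlim σ
    obtain ⟨N2, hN2⟩ := hlim (σ ++ [i])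
    have := htm (max N1 N2) σ i
    rwa [hN1 _ (le_max_left _ _), hN2 _ (le_max_right _ _)] at this
  obtain ⟨f, hf⟩ := pathSet_nonempty hFtm
  exact ⟨hsub, ⟨f, hsub hf⟩⟩
end

section
/- Let F be a treemap and let σ, τ be strings with σ a prefix of τ. Define G : ℕ^{<ℕ} → ℕ^{<ℕ} by G(γ) = F(τ⌢γ′) if γ = σ⌢γ′ for some string γ′ (possibly empty), and G(γ) = F(γ) otherwise. Then G is a treemap. -/
lemma treemap_mono (F : List ℕ → List ℕ) (hF : Treemap F) (α δ : List ℕ) :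
    F α <+: F (α ++ δ) := by
  induction δ using List.reverseRecOn with
  | nil => simp
  | append_singleton δ i ih =>
      calc F α <+: F (α ++ δ) := ih
        _ <+: F (α ++ δ) ++ [i] := List.prefix_append _ _
        _ <+: F ((α ++ δ) ++ [i]) := hF _ _
        _ = F (α ++ (δ ++ [i])) := by rw [List.append_assoc]

/-- If `σ ⊆ τ`, redefining a treemap by sending `σ⌢γ'` to `F(τ⌢γ')` (and leaving all
other strings alone) yields a treemap. -/
theorem advance_treemap (F G : List ℕ → List ℕ) (hF : Treemap F)
    (σ τ : List ℕ) (hστ : σ <+: τ)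
    (hG₁ : ∀ γ' : List ℕ, G (σ ++ γ') = F (τ ++ γ'))
    (hG₂ : ∀ γ : List ℕ, ¬ σ <+: γ → G γ = F γ) :
    Treemap G := by
  intro γ i
  by_cases h : σ <+: γ
  · obtain ⟨γ', rfl⟩ := h
    rw [hG₁ γ', List.append_assoc, hG₁ (γ' ++ [i]), ← List.append_assoc]
    exact hF _ _
  · by_cases h2 : σ <+: γ ++ [i]
    · have hσ : σ = γ ++ [i] := by
        rcases h2 with ⟨d, hd⟩
        rcases List.eq_nil_or_concat d with rfl | ⟨d', j, rfl⟩
        · simpa using hd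
        · exfalso; apply h
          have : γ = σ ++ d' := by
            have := hd
            rw [List.concat_eq_append, ← List.append_assoc] at this
            exact (List.append_inj' this rfl).1.symm
          exact ⟨d', this.symm⟩
      rw [hG₂ γ h, ← hσ]
      have h1 : G σ = F τ := by simpa using hG₁ []
      rw [h1]
      obtain ⟨d, rfl⟩ := hστ
      calc F γ ++ [i] <+: F (γ ++ [i]) := hF _ _
        _ = F σ := by rw [hσ]
        _ <+: F (σ ++ d) := treemap_mono F hF _ _
    · rw [hG₂ γ h, hG₂ _ h2]
      exact hF _ _
end

section
/- Every G_δ subset S of Baire space (a countable intersection of open sets in ℕ → ℕ) is, with its subspace topology, homeomorphic to some closed subset of Baire space with its subspace topology. -/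
/-!
Write `S = ⋂ n, U n` with `U n` open. For `x ∈ U n` let `d_n(x)` be the least `k` such that the
cylinder of length `k` around `x` lies in `U n`. Each `d_n` is locally constant on `U n`, and the
condition "`k` is that least length for `x`" only depends on `k` and the first `k` coordinates of
`x`. Hence `x ↦ (x, (d_n x)_n)` is a closed embedding of `S` into
`(ℕ → ℕ) × (ℕ → ℕ) ≃ₜ ℕ → ℕ`.
-/

open Set Topology

namespace PiNat

variable {E : ℕ → Type*} {U : Set (∀ n, E n)} {x y : ∀ n, E n} {k : ℕ}

noncomputable def cylinderDepth (U : Set (∀ n, E n)) (x : ∀ n, E n) : ℕ :=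
  sInf {n | cylinder x n ⊆ U}

lemma mem_of_isLeast_cylinder_subset (h : IsLeast {n | cylinder x n ⊆ U} k) : x ∈ U :=
  h.1 (self_mem_cylinder x k)

lemma cylinderDepth_eq_of_isLeast (h : IsLeast {n | cylinder x n ⊆ U} k) :
    cylinderDepth U x = k :=
  h.csInf_eq

lemma isLeast_cylinder_subset_congr (hy : y ∈ cylinder x k) :
    IsLeast {n | cylinder y n ⊆ U} k ↔ IsLeast {n | cylinder x n ⊆ U} k := by
  have hcyl : ∀ m ≤ k, cylinder y m = cylinder x m := fun m hm =>
    mem_cylinder_iff_eq.1 (cylinder_anti x hm hy)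
  simp only [IsLeast, lowerBounds, mem_ofPred_eq, hcyl k le_rfl]
  refine and_congr_right fun _ => forall_congr' fun m => ?_
  rcases lt_or_ge m k with hm | hm
  · rw [hcyl m hm.le]
  · simp only [hm, implies_true]

variable [∀ n, TopologicalSpace (E n)] [∀ n, DiscreteTopology (E n)]

lemma isLeast_cylinderDepth (hU : IsOpen U) (hx : x ∈ U) :
    IsLeast {n | cylinder x n ⊆ U} (cylinderDepth U x) := by
  obtain ⟨_, ⟨z, n, rfl⟩, hxz, hzU⟩ :=
    (isTopologicalBasis_cylinders E).exists_subset_of_mem_open hx hU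
  have hne : {n | cylinder x n ⊆ U}.Nonempty :=
    ⟨n, (mem_cylinder_iff_eq.1 hxz).trans_subset hzU⟩
  exact ⟨Nat.sInf_mem hne, fun _ hm => Nat.sInf_le hm⟩

lemma continuousOn_cylinderDepth (hU : IsOpen U) : ContinuousOn (cylinderDepth U) U := by
  intro x hx
  have hconst : cylinderDepth U =ᶠ[𝓝 x] fun _ => cylinderDepth U x := by
    filter_upwards [(isOpen_cylinder E x (cylinderDepth U x)).mem_nhds (self_mem_cylinder _ _)]
      with y hy
    exact cylinderDepth_eq_of_isLeast
      ((isLeast_cylinder_subset_congr hy).2 (isLeast_cylinderDepth hU hx))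
  exact (continuousAt_const.congr hconst.symm).continuousWithinAt

lemma isClosed_setOf_isLeast_cylinder_subset (U : Set (∀ n, E n)) :
    IsClosed {p : (∀ n, E n) × ℕ | IsLeast {n | cylinder p.1 n ⊆ U} p.2} := by
  have hloc :
      IsLocallyConstant fun p : (∀ n, E n) × ℕ => IsLeast {n | cylinder p.1 n ⊆ U} p.2 := by
    refine (IsLocallyConstant.iff_exists_open _).2 fun p => ⟨cylinder p.1 p.2 ×ˢ {p.2},
      (isOpen_cylinder E _ _).prod (isOpen_discrete _), ⟨self_mem_cylinder _ _, rfl⟩, ?_⟩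
    rintro ⟨y, k⟩ ⟨hy, rfl : k = p.2⟩
    exact propext (isLeast_cylinder_subset_congr hy)
  simpa using hloc.isClosed_fiber True

theorem isClosedEmbedding_prodMk_cylinderDepth {U : ℕ → Set (∀ n, E n)}
    (hU : ∀ n, IsOpen (U n)) :
    IsClosedEmbedding fun x : ⋂ n, U n => ((x : ∀ n, E n), fun n => cylinderDepth (U n) x) := by
  have hmem (x : ⋂ n, U n) (n : ℕ) : (x : ∀ n, E n) ∈ U n := mem_iInter.1 x.2 n
  have hcont :
      Continuous fun x : ⋂ n, U n => ((x : ∀ n, E n), fun n => cylinderDepth (U n) x) :=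
    continuous_subtype_val.prodMk <| continuous_pi fun n =>
      (continuousOn_cylinderDepth (hU n)).comp_continuous continuous_subtype_val (hmem · n)
  have hrange : range (fun x : ⋂ n, U n => ((x : ∀ n, E n), fun n => cylinderDepth (U n) x)) =
      ⋂ n, (fun p : (∀ n, E n) × (ℕ → ℕ) => (p.1, p.2 n)) ⁻¹'
        {q | IsLeast {m | cylinder q.1 m ⊆ U n} q.2} := by
    ext ⟨y, d⟩
    simp only [mem_range, mem_iInter, mem_preimage, mem_ofPred_eq]
    constructor
    · rintro ⟨x, hx⟩ n
      cases hx
      exact isLeast_cylinderDepth (hU n) (hmem x n)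
    · intro h
      exact ⟨⟨y, mem_iInter.2 fun n => mem_of_isLeast_cylinder_subset (h n)⟩,
        Prod.ext rfl (funext fun n => cylinderDepth_eq_of_isLeast (h n))⟩
  refine ⟨.of_comp hcont continuous_fst IsEmbedding.subtypeVal, ?_⟩
  rw [hrange]
  exact isClosed_iInter fun n =>
    (isClosed_setOf_isLeast_cylinder_subset (U n)).preimage (by fun_prop)

end PiNat

/-- Every Gδ subset of Baire space is homeomorphic (with the subspace topologies) to a
closed subset of Baire space. -/
theorem gdelta_homeomorph_closed (S : Set (ℕ → ℕ)) (hS : IsGδ S) :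
    ∃ C : Set (ℕ → ℕ), IsClosed C ∧ Nonempty (↥S ≃ₜ ↥C) := by
  obtain ⟨U, hU, rfl⟩ := hS.eq_iInter_nat
  let H : (ℕ → ℕ) × (ℕ → ℕ) ≃ₜ (ℕ → ℕ) :=
    Homeomorph.sumArrowHomeomorphProdArrow.symm.trans
      (Homeomorph.piCongrLeft (Y := fun _ => ℕ) Equiv.natSumNatEquivNat)
  have hf := H.isClosedEmbedding.comp (PiNat.isClosedEmbedding_prodMk_cylinderDepth hU)
  exact ⟨_, hf.isClosed_range, ⟨hf.isEmbedding.toHomeomorph⟩⟩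
end
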